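/- Let 𝔧 be a strongly stable ideal in R whose sous-escalier N(𝔧) is finite (i.e., 𝔧 is Artinian), and let 𝔊 be a [𝔧,m]-marked set for some m ≥ reg(𝔧) − 1. Then for every monomial x^β ∈ 𝔧, the 𝔊_∗-reduction of x^β terminates at a polynomial g_β with supp(g_β) ⊆ N(𝔧)_{≤ reg(𝔧) − 1}. Consequently, for m ≥ sat(𝔧), 𝔊 is a [𝔧, sat(𝔧)−1]-marked basis if and only if x_i f_α reduces to 0 by 𝔊_∗ for every f_α ∈ 𝔊 and every x_i > min(x^α). -/

import Mathlib

/-!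
Since `𝔧` is strongly stable, every monomial of degree `d` is reached from `x_1^d` by Borel
moves; as `𝔧` is Artinian, some `x_1^D` is a minimal generator, every monomial of degree `≥ D`
lies in `𝔧`, and `reg(𝔧) = sat(𝔧) = D`.

Every `x^γ ∈ 𝔧` splits uniquely as `x^α · x^η` with `x^α ∈ B_𝔧` and `max x^η ≤ min x^α`.
Read the exponents of the cofactor `x^η` as the digits of a number in base `D + 1`. A reduction
step replaces `x^γ` by `x^η · T(f_α)`, and every monomial of `𝔧` it creates has a cofactor
of smaller weight, because the tails of `𝔊` lie in `N(𝔧)`, that is in degrees `< D`. So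
`𝔊_∗`-reduction terminates in the multiset order, with remainders supported on
`N(𝔧)_{≤ D-1}`.

For the criterion, the same weight shows that if every `x_i f_α` with `x_i > min x^α` reduces to
`0`, then every `x^δ f_β` is a combination of star products `x^η f_α`. So these star products
span `(𝔊)`. In a nonzero combination of star products, the one whose cofactor has the largest
weight contributes its head `x^{α+η} ∈ 𝔧`, which nothing cancels. Hence `(𝔊)` meets
`⟨N(𝔧)⟩` only in `0`.
-/

open MvPolynomial

namespace Paper

/-- Monomials (exponent vectors) in `N` variables. -/
abbrev Mon (N : ℕ) := Fin N →₀ ℕ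

variable {N : ℕ}

/-- Total degree of a monomial. -/
def mdeg (u : Mon N) : ℕ := u.sum fun _ e => e

/-- `BorelStep a b` : `b` is obtained from `a` by one increasing elementary move,
i.e. `x^a · x_j = x^b · x_i` with `i < j`. -/
def BorelStep (a b : Mon N) : Prop :=
  ∃ i j : Fin N, i < j ∧ a + Finsupp.single j 1 = b + Finsupp.single i 1

/-- `BorelLt a b` : `a <_B b`, i.e. `b` is obtained from `a` by a nonempty
sequence of increasing elementary moves. -/
def BorelLt (a b : Mon N) : Prop := Relation.TransGen BorelStep a b

/-- A (combinatorially encoded) monomial ideal: a set of monomials closed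
under multiplication by monomials. -/
def MonIdeal (J : Set (Mon N)) : Prop := ∀ u ∈ J, ∀ d : Mon N, u + d ∈ J

/-- A strongly stable monomial ideal. -/
def StronglyStable (J : Set (Mon N)) : Prop :=
  MonIdeal J ∧ ∀ b ∈ J, ∀ a, BorelLt b a → a ∈ J

/-- The minimal monomial basis `B_J` of a monomial ideal. -/
def MinBasis (J : Set (Mon N)) : Set (Mon N) :=
  {u | u ∈ J ∧ ∀ v ∈ J, v ≤ u → v = u}

/-- `min(x^a) ≥ max(x^h)`. -/
def StarCond (a h : Mon N) : Prop :=
  ∀ i j : Fin N, a i ≠ 0 → h j ≠ 0 → j ≤ i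


variable (K : Type) [Field K]

/-- The monomial `x^u` as a polynomial. -/
noncomputable def mono {N : ℕ} (u : Mon N) : MvPolynomial (Fin N) K :=
  MvPolynomial.monomial u (1 : K)

/-- The (actual) monomial ideal of `S` spanned by a set of monomials. -/
noncomputable def idealOf {N : ℕ} (J : Set (Mon N)) : Ideal (MvPolynomial (Fin N) K) :=
  Ideal.span (mono K '' J)

/-- The irrelevant maximal ideal `(x_0, …, x_n)`. -/
noncomputable def irrel (N : ℕ) : Ideal (MvPolynomial (Fin N) K) :=
  Ideal.span (Set.range MvPolynomial.X)

/-- The saturation `I^sat = ⋃_j (I : (x_0,…,x_n)^j)`. -/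
noncomputable def satIdeal {N : ℕ} (I : Ideal (MvPolynomial (Fin N) K)) :
    Ideal (MvPolynomial (Fin N) K) :=
  ⨆ k : ℕ, Submodule.colon I ((irrel K N ^ k : Ideal (MvPolynomial (Fin N) K)) : Set (MvPolynomial (Fin N) K))

/-- The satiety of a homogeneous ideal: the smallest `m` such that
`I_t = (I^sat)_t` for all `t ≥ m`. -/
noncomputable def satiety {N : ℕ} (I : Ideal (MvPolynomial (Fin N) K)) : ℕ :=
  sInf {m | ∀ t, m ≤ t → ∀ p : MvPolynomial (Fin N) K,
    p.IsHomogeneous t → (p ∈ I ↔ p ∈ satIdeal K I)}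

/-- The saturation of a combinatorial monomial ideal. -/
def msat {N : ℕ} (J : Set (Mon N)) : Set (Mon N) :=
  {u | ∃ k : ℕ, ∀ d : Mon N, mdeg d = k → u + d ∈ J}

/-- The satiety of a combinatorial monomial ideal. -/
noncomputable def msatiety {N : ℕ} (J : Set (Mon N)) : ℕ :=
  sInf {m | ∀ u : Mon N, m ≤ mdeg u → (u ∈ J ↔ u ∈ msat J)}

/-- A non-homogeneous `𝔧`-marked set: marked polynomials `f_α` with pairwise
distinct head terms forming `B_𝔧` and tails supported outside `𝔧`. -/
def NHMarkedSet {N : ℕ} (𝔧 : Set (Mon N)) (f : Mon N → MvPolynomial (Fin N) K) : Prop :=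
  ∀ α ∈ MinBasis 𝔧,
    MvPolynomial.coeff α (f α) = 1 ∧
    ∀ u ∈ (f α).support, u ≠ α → u ∉ 𝔧

/-- One step of the `𝔊_∗`-reduction: the monomial `x^γ = x^α ∗_𝔧 x^η` of the
support of `g` is replaced by `x^η · T(f_α)`. -/
def RStep {N : ℕ} (𝔧 : Set (Mon N)) (f : Mon N → MvPolynomial (Fin N) K)
    (g g₁ : MvPolynomial (Fin N) K) : Prop :=
  ∃ γ α η : Mon N, γ ∈ g.support ∧ γ ∈ 𝔧 ∧ α ∈ MinBasis 𝔧 ∧ γ = α + η ∧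
    StarCond α η ∧
    g₁ = g - MvPolynomial.coeff γ g • (mono K η * f α)

/-- The `𝔊_∗`-reduction relation (reflexive-transitive closure of `RStep`). -/
def Reduces {N : ℕ} (𝔧 : Set (Mon N)) (f : Mon N → MvPolynomial (Fin N) K) :
    MvPolynomial (Fin N) K → MvPolynomial (Fin N) K → Prop :=
  Relation.ReflTransGen (RStep K 𝔧 f)

/-- `g` is reduced: `supp(g) ∩ 𝔧 = ∅`. -/
def IsReducedPoly {N : ℕ} (𝔧 : Set (Mon N)) (g : MvPolynomial (Fin N) K) : Prop :=
  ∀ u ∈ g.support, u ∉ 𝔧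

/-- A `[𝔧,m]`-marked set: a n.h. `𝔧`-marked set whose tails are supported in
`N(𝔧)_{≤ max{m,|α|}}`. -/
def JmMarkedSet {N : ℕ} (𝔧 : Set (Mon N)) (m : ℕ)
    (f : Mon N → MvPolynomial (Fin N) K) : Prop :=
  ∀ α ∈ MinBasis 𝔧,
    MvPolynomial.coeff α (f α) = 1 ∧
    ∀ u ∈ (f α).support, u ≠ α → (u ∉ 𝔧 ∧ mdeg u ≤ max m (mdeg α))

/-- The ideal `(𝔊)` generated by a marked set. -/
noncomputable def idealG {N : ℕ} (𝔧 : Set (Mon N))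
    (f : Mon N → MvPolynomial (Fin N) K) : Ideal (MvPolynomial (Fin N) K) :=
  Ideal.span (f '' MinBasis 𝔧)

/-- A `[𝔧,m]`-completion of `𝔊`: marked polynomials `f_β ∈ (𝔊)` with pairwise
distinct head terms the monomials of `𝔧_{≤m} \ B_𝔧` and tails in `N(𝔧)_{≤m}`. -/
def IsCompletion {N : ℕ} (𝔧 : Set (Mon N)) (m : ℕ)
    (f h : Mon N → MvPolynomial (Fin N) K) : Prop :=
  ∀ β : Mon N, β ∈ 𝔧 → mdeg β ≤ m → β ∉ MinBasis 𝔧 →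
    h β ∈ idealG K 𝔧 f ∧
    MvPolynomial.coeff β (h β) = 1 ∧
    ∀ u ∈ (h β).support, u ≠ β → (u ∉ 𝔧 ∧ mdeg u ≤ m)

/-- `g'` is a `[𝔧,m]`-reduced form of `g` modulo `(𝔊)`. -/
def IsReducedForm {N : ℕ} (𝔧 : Set (Mon N)) (m : ℕ)
    (f : Mon N → MvPolynomial (Fin N) K)
    (g g' : MvPolynomial (Fin N) K) : Prop :=
  (∀ u ∈ g'.support, u ∉ 𝔧 ∧ mdeg u ≤ max m g.totalDegree) ∧
  g - g' ∈ idealG K 𝔧 f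

/-- `R_{≤ t}`: the `K`-subspace of polynomials of degree at most `t`. -/
noncomputable def degLE (N : ℕ) (t : ℕ) : Submodule K (MvPolynomial (Fin N) K) where
  carrier := {g | ∀ u ∈ g.support, mdeg u ≤ t}
  zero_mem' := by simp
  add_mem' := by
    intro a b ha hb u hu
    rcases Finset.mem_union.mp (MvPolynomial.support_add hu) with h | h
    · exact ha u h
    · exact hb u h
  smul_mem' := by
    intro c a ha u hu
    exact ha u (MvPolynomial.support_smul hu)

/-- `⟨N(𝔧)_{≤t}⟩`: the `K`-span of the monomials outside `𝔧` of degree `≤ t`. -/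
noncomputable def spanNLE {N : ℕ} (𝔧 : Set (Mon N)) (t : ℕ) :
    Submodule K (MvPolynomial (Fin N) K) :=
  Submodule.span K (mono K '' {u : Mon N | u ∉ 𝔧 ∧ mdeg u ≤ t})

/-- `(𝔊)_{≤t}`: the `K`-subspace of elements of `(𝔊)` of degree `≤ t`. -/
noncomputable def GleSub {N : ℕ} (𝔧 : Set (Mon N))
    (f : Mon N → MvPolynomial (Fin N) K) (t : ℕ) :
    Submodule K (MvPolynomial (Fin N) K) :=
  (idealG K 𝔧 f).restrictScalars K ⊓ degLE K N t

/-- A `[𝔧,m]`-marked basis: a `[𝔧,m]`-marked set with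
`R_{≤t} = ⟨N(𝔧)_{≤t}⟩ ⊕ (𝔊)_{≤t}` for all `t ≥ m`. -/
def JmMarkedBasis {N : ℕ} (𝔧 : Set (Mon N)) (m : ℕ)
    (f : Mon N → MvPolynomial (Fin N) K) : Prop :=
  JmMarkedSet K 𝔧 m f ∧
  ∀ t, m ≤ t →
    Disjoint (spanNLE K 𝔧 t) (GleSub K 𝔧 f t) ∧
    spanNLE K 𝔧 t ⊔ GleSub K 𝔧 f t = degLE K N t

/-- The regularity of a strongly stable monomial ideal: the maximal degree of
a minimal generator. -/
noncomputable def regC {N : ℕ} (𝔧 : Set (Mon N)) : ℕ :=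
  sSup (mdeg '' MinBasis 𝔧)

/-- The satiety of a strongly stable monomial ideal in `K[x_1,…,x_{n+1}]`:
the maximal degree of a minimal generator divisible by the smallest
variable `x_1` (the variable of index `0`). -/
noncomputable def satC {n : ℕ} (𝔧 : Set (Mon (n + 1))) : ℕ :=
  sSup (mdeg '' {b | b ∈ MinBasis 𝔧 ∧ b 0 ≠ 0})

lemma mdeg_add (u v : Mon N) : mdeg (u + v) = mdeg u + mdeg v := map_add Finsupp.degree u v

lemma mdeg_single (i : Fin N) (k : ℕ) : mdeg (Finsupp.single i k) = k := Finsupp.degree_single i k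

lemma mdeg_sub_single {u : Mon N} {i : Fin N} (hi : u i ≠ 0) :
    mdeg (u - Finsupp.single i 1) = mdeg u - 1 := by
  have h : Finsupp.single i 1 ≤ u := Finsupp.single_le_iff.2 (Nat.one_le_iff_ne_zero.2 hi)
  have := mdeg_add (u - Finsupp.single i 1) (Finsupp.single i 1)
  rw [tsub_add_cancel_of_le h, mdeg_single] at this
  omega

lemma BorelStep.add_right {a b : Mon N} (h : BorelStep a b) (c : Mon N) :
    BorelStep (a + c) (b + c) := by
  obtain ⟨i, j, hij, e⟩ := h
  exact ⟨i, j, hij, by rw [add_right_comm, e, add_right_comm]⟩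

lemma mdeg_le_of_mem_minBasis {𝔧 : Set (Mon N)} {D : ℕ} (hD : ∀ u ∉ 𝔧, mdeg u < D)
    {β : Mon N} (hβ : β ∈ MinBasis 𝔧) : mdeg β ≤ D := by
  obtain rfl | ⟨i, hi⟩ := eq_or_ne β 0 |>.imp_right Finsupp.ne_iff.1
  · exact Nat.zero_le D
  have hout : β - Finsupp.single i 1 ∉ 𝔧 := fun h => by
    have := DFunLike.congr_fun (hβ.2 _ h tsub_le_self) i
    simp only [Finsupp.tsub_apply, Finsupp.single_eq_same] at this
    simp at hi
    omega
  have := hD _ hout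
  rw [mdeg_sub_single (by simpa using hi)] at this
  omega

section StronglyStable

variable {n : ℕ} {𝔧 : Set (Mon (n + 1))}

lemma reflTransGen_borelStep_single_zero (u : Mon (n + 1)) :
    Relation.ReflTransGen BorelStep (Finsupp.single 0 (mdeg u)) u := by
  induction h : mdeg u generalizing u with
  | zero => rw [(Finsupp.degree_eq_zero_iff u).1 h, Finsupp.single_zero]
  | succ d ih =>
    obtain ⟨i, hi⟩ : ∃ i, u i ≠ 0 := by
      by_contra! h0
      rw [show u = 0 from Finsupp.ext h0, mdeg, Finsupp.sum_zero_index] at h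
      omega
    have hu : u - Finsupp.single i 1 + Finsupp.single i 1 = u :=
      tsub_add_cancel_of_le (Finsupp.single_le_iff.2 (Nat.one_le_iff_ne_zero.2 hi))
    have hchain : Relation.ReflTransGen BorelStep (Finsupp.single 0 d + Finsupp.single 0 1)
        (u - Finsupp.single i 1 + Finsupp.single 0 1) :=
      (ih _ (by rw [mdeg_sub_single hi, h]; rfl)).lift _ fun a b hab => hab.add_right _
    rw [← Finsupp.single_add] at hchain
    rcases (Fin.zero_le i).eq_or_lt with rfl | hi0
    · rwa [hu] at hchain
    · exact hchain.tail ⟨0, i, hi0, by rw [add_right_comm, hu]⟩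

lemma StronglyStable.mem_of_le_mdeg (hss : StronglyStable 𝔧) {D : ℕ}
    (hD : Finsupp.single 0 D ∈ 𝔧) {u : Mon (n + 1)} (hu : D ≤ mdeg u) : u ∈ 𝔧 := by
  have hpow : Finsupp.single 0 (mdeg u) ∈ 𝔧 := by
    have := hss.1 _ hD (Finsupp.single 0 (mdeg u - D))
    rwa [← Finsupp.single_add, Nat.add_sub_cancel' hu] at this
  rcases Relation.reflTransGen_iff_eq_or_transGen.1 (reflTransGen_borelStep_single_zero u)
    with h | h
  · rwa [h]
  · exact hss.2 _ hpow _ h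

lemma StronglyStable.exists_single_zero_mem_minBasis (hss : StronglyStable 𝔧)
    (hfin : {u : Mon (n + 1) | u ∉ 𝔧}.Finite) :
    ∃ D, Finsupp.single 0 D ∈ MinBasis 𝔧 ∧ ∀ u ∉ 𝔧, mdeg u < D := by
  classical
  have hex : ∃ k, Finsupp.single (0 : Fin (n + 1)) k ∈ 𝔧 := by
    by_contra! h
    exact Set.infinite_range_of_injective (Finsupp.single_injective 0)
      (hfin.subset (Set.range_subset_iff.2 h))
  refine ⟨Nat.find hex, ⟨Nat.find_spec hex, fun v hv hle => ?_⟩, fun u hu => ?_⟩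
  · have hv0 : v = Finsupp.single 0 (v 0) := by
      ext i
      rcases eq_or_ne i 0 with rfl | hi
      · simp
      · simpa [Finsupp.single_eq_of_ne' (Ne.symm hi)] using Finsupp.le_def.1 hle i
    rw [hv0] at hv hle ⊢
    exact congrArg _ (le_antisymm (by simpa using Finsupp.le_def.1 hle 0) (Nat.find_min' hex hv))
  · by_contra! h
    exact hu (hss.mem_of_le_mdeg (Nat.find_spec hex) h)

lemma regC_eq {D : ℕ} (hD₀ : Finsupp.single 0 D ∈ MinBasis 𝔧) (hD : ∀ u ∉ 𝔧, mdeg u < D) :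
    regC 𝔧 = D :=
  IsGreatest.csSup_eq ⟨⟨_, hD₀, mdeg_single _ _⟩,
    by rintro _ ⟨β, hβ, rfl⟩; exact mdeg_le_of_mem_minBasis hD hβ⟩

lemma satC_eq {D : ℕ} (hD₀ : Finsupp.single 0 D ∈ MinBasis 𝔧) (hD : ∀ u ∉ 𝔧, mdeg u < D) :
    satC 𝔧 = D := by
  rcases Nat.eq_zero_or_pos D with rfl | hpos
  · have hempty : {b : Mon (n + 1) | b ∈ MinBasis 𝔧 ∧ b 0 ≠ 0} = ∅ := by
      refine Set.eq_empty_of_forall_notMem fun b ⟨hb, hb0⟩ => hb0 ?_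
      rw [Finsupp.single_zero] at hD₀
      simp [← hb.2 0 hD₀.1 (zero_le (a := b))]
    rw [satC, hempty, Set.image_empty, csSup_empty]; rfl
  · exact IsGreatest.csSup_eq ⟨⟨_, ⟨hD₀, by simpa using hpos.ne'⟩, mdeg_single _ _⟩,
      by rintro _ ⟨β, hβ, rfl⟩; exact mdeg_le_of_mem_minBasis hD hβ.1⟩

end StronglyStable

section StarDecomposition

variable {𝔧 : Set (Mon N)}

lemma StronglyStable.sub_single_mem (hss : StronglyStable 𝔧) {α : Mon N} (hα : α ∈ 𝔧)
    (hmin : α ∉ MinBasis 𝔧) {p : Fin N} (hp : α p ≠ 0) (hpmin : ∀ i, α i ≠ 0 → p ≤ i) :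
    α - Finsupp.single p 1 ∈ 𝔧 := by
  obtain ⟨v, hv, hvα, hne⟩ : ∃ v ∈ 𝔧, v ≤ α ∧ v ≠ α := by
    by_contra! h
    exact hmin ⟨hα, h⟩
  obtain ⟨q, hq⟩ : ∃ q, v q < α q := by
    by_contra! h
    exact hne (le_antisymm hvα (Finsupp.le_def.2 h))
  have hq𝔧 : α - Finsupp.single q 1 ∈ 𝔧 := by
    have hle : v ≤ α - Finsupp.single q 1 := Finsupp.le_def.2 fun i => by
      rcases eq_or_ne i q with rfl | hi
      · simp only [Finsupp.tsub_apply, Finsupp.single_eq_same]; omega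
      · simpa [Finsupp.single_eq_of_ne' (Ne.symm hi)] using Finsupp.le_def.1 hvα i
    have := hss.1 v hv (α - Finsupp.single q 1 - v)
    rwa [add_tsub_cancel_of_le hle] at this
  have hle : ∀ i, α i ≠ 0 → Finsupp.single i 1 ≤ α := fun i hi =>
    Finsupp.single_le_iff.2 (Nat.one_le_iff_ne_zero.2 hi)
  rcases (hpmin q (by omega)).eq_or_lt with rfl | hpq
  · exact hq𝔧
  · refine hss.2 _ hq𝔧 _ (.single ⟨p, q, hpq, ?_⟩)
    rw [tsub_add_cancel_of_le (hle q (by omega)), tsub_add_cancel_of_le (hle p hp)]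

lemma StronglyStable.exists_starDecomp_add (hss : StronglyStable 𝔧) {α : Mon N} (hα : α ∈ 𝔧)
    {η : Mon N} (hs : StarCond α η) :
    ∃ α' η', α' ∈ MinBasis 𝔧 ∧ α + η = α' + η' ∧ StarCond α' η' := by
  induction α using WellFoundedLT.induction generalizing η with
  | _ α ih =>
  by_cases hmin : α ∈ MinBasis 𝔧
  · exact ⟨α, η, hmin, rfl, hs⟩
  obtain ⟨p, hp, hpmin⟩ : ∃ p ∈ α.support, ∀ i ∈ α.support, p ≤ i := by
    refine α.support.exists_min_image id (Finsupp.support_nonempty_iff.2 ?_)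
    rintro rfl
    exact hmin ⟨hα, fun v _ hv => le_antisymm hv (zero_le (a := v))⟩
  rw [Finsupp.mem_support_iff] at hp
  have hpα : Finsupp.single p 1 ≤ α := Finsupp.single_le_iff.2 (Nat.one_le_iff_ne_zero.2 hp)
  have hlt : α - Finsupp.single p 1 < α := lt_of_le_of_ne tsub_le_self fun h => by
    have := DFunLike.congr_fun h p
    simp only [Finsupp.tsub_apply, Finsupp.single_eq_same] at this
    omega
  have hs₁ : StarCond (α - Finsupp.single p 1) (η + Finsupp.single p 1) := by
    intro i j hi hj
    have hi' : α i ≠ 0 := fun h => hi (by simp [h])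
    rcases eq_or_ne j p with rfl | hjp
    · exact hpmin i (Finsupp.mem_support_iff.2 hi')
    · exact hs i j hi' (by simpa [Finsupp.single_eq_of_ne' (Ne.symm hjp)] using hj)
  obtain ⟨α', η', hα', heq, hs'⟩ := ih _ hlt (hss.sub_single_mem hα hmin hp
    fun i hi => hpmin i (Finsupp.mem_support_iff.2 hi)) hs₁
  refine ⟨α', η', hα', ?_, hs'⟩
  rw [← heq, add_comm η, ← add_assoc, tsub_add_cancel_of_le hpα]

lemma StronglyStable.exists_starDecomp (hss : StronglyStable 𝔧) {γ : Mon N} (hγ : γ ∈ 𝔧) :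
    ∃ α η, α ∈ MinBasis 𝔧 ∧ γ = α + η ∧ StarCond α η := by
  simpa using hss.exists_starDecomp_add hγ (η := 0) fun _ _ _ h => absurd rfl h

lemma StarCond.le_or_le {a b e e' : Mon N} (hs : StarCond a e) (hs' : StarCond b e')
    (h : a + e = b + e') : a ≤ b ∨ b ≤ a := by
  by_contra! hc
  obtain ⟨i, hi⟩ : ∃ i, b i < a i := by simpa [Finsupp.le_def] using hc.1
  obtain ⟨k, hk⟩ : ∃ k, a k < b k := by simpa [Finsupp.le_def] using hc.2
  have hi' := DFunLike.congr_fun h i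
  have hk' := DFunLike.congr_fun h k
  simp only [Finsupp.add_apply] at hi' hk'
  have hki := hs i k (by omega) (by omega)
  have hik := hs' k i (by omega) (by omega)
  obtain rfl := le_antisymm hik hki
  omega

lemma starDecomp_unique {α α' η η' : Mon N} (hα : α ∈ MinBasis 𝔧) (hα' : α' ∈ MinBasis 𝔧)
    (hs : StarCond α η) (hs' : StarCond α' η') (h : α + η = α' + η') : α = α' ∧ η = η' := by
  have hαα' : α = α' := (hs.le_or_le hs' h).elim
    (fun hle => hα'.2 α hα.1 hle) (fun hle => (hα.2 α' hα'.1 hle).symm)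
  subst hαα'
  exact ⟨rfl, add_left_cancel h⟩

/-- The `η` of the star decomposition `γ = α + η`; meaningless for `γ ∉ 𝔧`. -/
noncomputable def starCofactor (𝔧 : Set (Mon N)) (γ : Mon N) : Mon N :=
  Classical.epsilon fun η => ∃ α ∈ MinBasis 𝔧, γ = α + η ∧ StarCond α η

lemma starCofactor_add {α η : Mon N} (hα : α ∈ MinBasis 𝔧) (hs : StarCond α η) :
    starCofactor 𝔧 (α + η) = η := by
  obtain ⟨α', hα', h, hs'⟩ := Classical.epsilon_spec (p := fun η' =>
    ∃ α' ∈ MinBasis 𝔧, α + η = α' + η' ∧ StarCond α' η') ⟨η, α, hα, rfl, hs⟩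
  exact (starDecomp_unique hα hα' hs hs' h).2.symm

end StarDecomposition

section RadixWeight

noncomputable def radixWeight (D : ℕ) : Mon N →+ ℕ :=
  Finsupp.weight fun i : Fin N => (D + 1) ^ (i : ℕ)

variable {D : ℕ}

lemma radixWeight_single (i : Fin N) (k : ℕ) :
    radixWeight D (Finsupp.single i k) = k * (D + 1) ^ (i : ℕ) :=
  Finsupp.weight_single _ _ _

lemma pow_le_radixWeight {u : Mon N} {i : Fin N} (hi : u i ≠ 0) :
    (D + 1) ^ (i : ℕ) ≤ radixWeight D u :=
  Finsupp.le_weight_of_ne_zero' (fun i : Fin N => (D + 1) ^ (i : ℕ)) hi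

lemma radixWeight_lt_pow {η : Mon N} {j : Fin N} (hη : ∀ i, η i ≠ 0 → i < j)
    (hdeg : mdeg η ≤ D) : radixWeight D η < (D + 1) ^ (j : ℕ) := by
  rcases hc : (j : ℕ) with _ | c
  · have hη0 : η = 0 := Finsupp.ext fun i => by_contra fun h => by
      simpa [Fin.lt_def, hc] using hη i h
    simp [hη0]
  calc radixWeight D η = ∑ i, η i * (D + 1) ^ (i : ℕ) := by
        simp [radixWeight, Finsupp.weight_eq_sum]
    _ ≤ ∑ i, η i * (D + 1) ^ c := Finset.sum_le_sum fun i _ => by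
        rcases eq_or_ne (η i) 0 with h | h
        · simp [h]
        · exact Nat.mul_le_mul_left _ (Nat.pow_le_pow_right (by omega)
            (by have := hη i h; omega))
    _ = mdeg η * (D + 1) ^ c := by rw [← Finset.sum_mul, mdeg, ← Finsupp.degree_eq_sum]; rfl
    _ ≤ D * (D + 1) ^ c := Nat.mul_le_mul_right _ hdeg
    _ < (D + 1) ^ (c + 1) := by
        rw [pow_succ']
        exact Nat.mul_lt_mul_of_pos_right (Nat.lt_succ_self D) (by positivity)

end RadixWeight

section StarRank

variable {𝔧 : Set (Mon N)} {D : ℕ}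

/-- `x^{α'} ∤ x^u`, and `u` exceeds `α'` only in variables below those where `α'` exceeds `u`. -/
lemma radixWeight_lt_of_add_eq (hJ : MonIdeal 𝔧) {u η α' η' : Mon N} (hu : u ∉ 𝔧)
    (hdeg : mdeg u ≤ D) (hα' : α' ∈ 𝔧) (hs : StarCond α' η') (h : η + u = α' + η') :
    radixWeight D η' < radixWeight D η := by
  have h' : ∀ i, η i + u i = α' i + η' i := fun i => by simpa using DFunLike.congr_fun h i
  obtain ⟨q, hq⟩ : ∃ q, u q < α' q := by
    by_contra! hle
    have := hJ α' hα' (u - α')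
    rw [add_tsub_cancel_of_le (Finsupp.le_def.2 hle)] at this
    exact hu this
  have hsplit : η' + (α' - u) = η + (u - α') := by
    ext i
    simp only [Finsupp.add_apply, Finsupp.tsub_apply]
    have := h' i
    omega
  have hlow : radixWeight D (u - α') < (D + 1) ^ (q : ℕ) := by
    refine radixWeight_lt_pow (fun l hl => lt_of_le_of_ne ?_ ?_) ?_
    · exact hs q l (by omega) (by simp at hl; have := h' l; omega)
    · rintro rfl
      simp at hl
      omega
    · exact (Finsupp.degree_mono tsub_le_self).trans hdeg
  have hhigh : (D + 1) ^ (q : ℕ) ≤ radixWeight D (α' - u) :=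
    pow_le_radixWeight (by simp; omega)
  have := congrArg (radixWeight D) hsplit
  simp only [map_add] at this
  omega

lemma StarCond.lt_and_mdeg_le_of_add_eq_single_add {α η w : Mon N} {j : Fin N} (hα : α ∈ 𝔧)
    (hs : StarCond α η) (hw : ∀ v ∈ 𝔧, v ≤ w → ∃ i < j, v i ≠ 0)
    (h : α + η = Finsupp.single j 1 + w) :
    (∀ p, η p ≠ 0 → p < j) ∧ mdeg η ≤ mdeg w := by
  have h' : ∀ i, α i + η i = Finsupp.single j 1 i + w i := fun i => by
    simpa using DFunLike.congr_fun h i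
  constructor
  · intro p hp
    by_contra! hjp
    have hαw : α ≤ w := Finsupp.le_def.2 fun i => by
      have := h' i
      rcases eq_or_ne i j with rfl | hij
      · rcases eq_or_ne (α i) 0 with hαi | hαi
        · omega
        · obtain rfl := le_antisymm (hs i p hαi hp) hjp
          simp only [Finsupp.single_eq_same] at this
          omega
      · simp only [Finsupp.single_eq_of_ne' (Ne.symm hij)] at this
        omega
    obtain ⟨i, hij, hi⟩ := hw α hα hαw
    exact absurd (hs i p hi hp) (not_le.2 (hij.trans_le hjp))
  · have hα0 : mdeg α ≠ 0 := fun h0 => by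
      obtain rfl := (Finsupp.degree_eq_zero_iff α).1 h0
      obtain ⟨i, -, hi⟩ := hw 0 hα (zero_le (a := w))
      exact hi rfl
    have := congrArg mdeg h
    rw [mdeg_add, mdeg_add, mdeg_single] at this
    omega

noncomputable def starRank (𝔧 : Set (Mon N)) (D : ℕ) (γ : Mon N) : ℕ :=
  radixWeight D (starCofactor 𝔧 γ)

lemma starRank_add {α η : Mon N} (hα : α ∈ MinBasis 𝔧) (hs : StarCond α η) :
    starRank 𝔧 D (α + η) = radixWeight D η := by
  rw [starRank, starCofactor_add hα hs]

lemma starRank_lt_of_add_eq (hss : StronglyStable 𝔧) {u η : Mon N} (hu : u ∉ 𝔧)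
    (hdeg : mdeg u ≤ D) (hu𝔧 : η + u ∈ 𝔧) : starRank 𝔧 D (η + u) < radixWeight D η := by
  obtain ⟨α', η', hα', h, hs⟩ := hss.exists_starDecomp hu𝔧
  rw [h, starRank_add hα' hs]
  exact radixWeight_lt_of_add_eq hss.1 hu hdeg hα'.1 hs h

end StarRank

/-- Termination by the multiset extension of `ρ`. -/
theorem exists_reflTransGen_eq_empty_of_descent {α β : Type*} {r : α → α → Prop}
    (S : α → Finset β) (ρ : β → ℕ)
    (hstep : ∀ a, ∀ b ∈ S a, ∃ a', r a a' ∧ ∀ c ∈ S a', (c ∈ S a ∧ c ≠ b) ∨ ρ c < ρ b)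
    (a : α) : ∃ a', Relation.ReflTransGen r a a' ∧ S a' = ∅ := by
  classical
  suffices H : ∀ k a, (∀ b ∈ S a, ρ b < k) → ∃ a', Relation.ReflTransGen r a a' ∧ S a' = ∅ from
    H _ a fun b hb => Nat.lt_succ_of_le (Finset.le_sup (f := ρ) hb)
  intro k
  induction k with
  | zero => exact fun a ha => ⟨a, .refl, Finset.eq_empty_of_forall_notMem fun b hb => by
      have := ha b hb; omega⟩
  | succ k ih =>
    intro a ha
    induction hc : ((S a).filter (ρ · = k)).card using Nat.strong_induction_on generalizing a with
    | _ c ihc =>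
    by_cases htop : ∃ b ∈ S a, ρ b = k
    · obtain ⟨b, hb, hbk⟩ := htop
      obtain ⟨a', hr, ha'⟩ := hstep a b hb
      have hsub : (S a').filter (ρ · = k) ⊆ ((S a).filter (ρ · = k)).erase b := by
        intro x hx
        rw [Finset.mem_filter] at hx
        rcases ha' x hx.1 with ⟨hxa, hxb⟩ | hlt
        · exact Finset.mem_erase.2 ⟨hxb, Finset.mem_filter.2 ⟨hxa, hx.2⟩⟩
        · omega
      have hbmem : b ∈ (S a).filter (ρ · = k) := Finset.mem_filter.2 ⟨hb, hbk⟩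
      have hcard : ((S a').filter (ρ · = k)).card < c := by
        have := Finset.card_le_card hsub
        rw [Finset.card_erase_of_mem hbmem] at this
        have := Finset.card_pos.2 ⟨b, hbmem⟩
        omega
      have ha'k : ∀ x ∈ S a', ρ x < k + 1 := fun x hx => by
        rcases ha' x hx with ⟨hxa, -⟩ | hlt
        · exact ha x hxa
        · omega
      obtain ⟨a'', hr', ha''⟩ := ihc _ hcard a' ha'k rfl
      exact ⟨a'', .head hr hr', ha''⟩
    · push Not at htop
      exact ih a fun b hb => lt_of_le_of_ne (Nat.le_of_lt_succ (ha b hb)) (htop b hb)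

section Reduction

variable {K} {𝔧 : Set (Mon N)} {f : Mon N → MvPolynomial (Fin N) K}

lemma coeff_add_mono_mul (η u : Mon N) (p : MvPolynomial (Fin N) K) :
    coeff (η + u) (mono K η * p) = coeff u p := by
  rw [mono, coeff_monomial_mul, one_mul]

lemma exists_eq_add_of_mem_support_mono_mul {η v : Mon N} {p : MvPolynomial (Fin N) K}
    (hv : v ∈ (mono K η * p).support) : ∃ u ∈ p.support, v = η + u := by
  rw [mem_support_iff, mono, coeff_monomial_mul'] at hv
  split_ifs at hv with hle
  · exact ⟨v - η, mem_support_iff.2 (by simpa using hv), (add_tsub_cancel_of_le hle).symm⟩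
  · exact absurd rfl hv

lemma mem_support_sub_smul_mono_mul {α η v : Mon N} {g p : MvPolynomial (Fin N) K}
    (hp : coeff α p = 1) (hv : v ∈ (g - coeff (α + η) g • (mono K η * p)).support) :
    v ≠ α + η ∧ (v ∈ g.support ∨ ∃ u ∈ p.support, u ≠ α ∧ v = η + u) := by
  have hne : v ≠ α + η := by
    rintro rfl
    refine mem_support_iff.1 hv ?_
    rw [coeff_sub, coeff_smul, add_comm α η, coeff_add_mono_mul, hp, smul_eq_mul, mul_one,
      sub_self]
  refine ⟨hne, ?_⟩
  rcases Finset.mem_union.1 (support_sub _ _ _ hv) with hg | hv'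
  · exact .inl hg
  · obtain ⟨u, hu, rfl⟩ := exists_eq_add_of_mem_support_mono_mul (support_smul hv')
    exact .inr ⟨u, hu, by rintro rfl; exact hne (add_comm _ _), rfl⟩

variable {D : ℕ}

lemma mem_support_or_starRank_lt (hss : StronglyStable 𝔧) (hD : ∀ u ∉ 𝔧, mdeg u < D)
    (hf : NHMarkedSet K 𝔧 f) {α η v : Mon N} (hα : α ∈ MinBasis 𝔧) {g : MvPolynomial (Fin N) K}
    (hv : v ∈ (g - coeff (α + η) g • (mono K η * f α)).support) (hv𝔧 : v ∈ 𝔧) :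
    (v ∈ g.support ∧ v ≠ α + η) ∨ starRank 𝔧 D v < radixWeight D η := by
  obtain ⟨hne, hg | ⟨u, hu, huα, rfl⟩⟩ := mem_support_sub_smul_mono_mul (hf α hα).1 hv
  · exact .inl ⟨hg, hne⟩
  · have hu𝔧 := (hf α hα).2 u hu huα
    exact .inr (starRank_lt_of_add_eq hss hu𝔧 (hD u hu𝔧).le hv𝔧)

theorem exists_reduces_isReducedPoly (hss : StronglyStable 𝔧) (hD : ∀ u ∉ 𝔧, mdeg u < D)
    (hf : NHMarkedSet K 𝔧 f) (g : MvPolynomial (Fin N) K) :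
    ∃ g', Reduces K 𝔧 f g g' ∧ IsReducedPoly K 𝔧 g' := by
  classical
  have hstep : ∀ g : MvPolynomial (Fin N) K, ∀ γ ∈ g.support.filter (· ∈ 𝔧), ∃ g₁,
      RStep K 𝔧 f g g₁ ∧ ∀ v ∈ g₁.support.filter (· ∈ 𝔧),
        (v ∈ g.support.filter (· ∈ 𝔧) ∧ v ≠ γ) ∨ starRank 𝔧 D v < starRank 𝔧 D γ := by
    intro g γ hγ
    rw [Finset.mem_filter] at hγ
    obtain ⟨α, η, hα, rfl, hs⟩ := hss.exists_starDecomp hγ.2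
    refine ⟨_, ⟨_, α, η, hγ.1, hγ.2, hα, rfl, hs, rfl⟩, fun v hv => ?_⟩
    rw [Finset.mem_filter] at hv
    rw [Finset.mem_filter, starRank_add hα hs]
    exact (mem_support_or_starRank_lt hss hD hf hα hv.1 hv.2).imp_left
      fun h => ⟨⟨h.1, hv.2⟩, h.2⟩
  obtain ⟨g', hred, hempty⟩ := exists_reflTransGen_eq_empty_of_descent _ _ hstep g
  exact ⟨g', hred, fun u hu hu𝔧 => Finset.notMem_empty u (hempty ▸ Finset.mem_filter.2 ⟨hu, hu𝔧⟩)⟩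

lemma Reduces.sub_mem_idealG {g g' : MvPolynomial (Fin N) K} (h : Reduces K 𝔧 f g g') :
    g - g' ∈ idealG K 𝔧 f := by
  induction h with
  | refl => simp
  | tail _ hstep ih =>
    obtain ⟨γ, α, η, -, -, hα, -, -, rfl⟩ := hstep
    rw [sub_sub_eq_add_sub, add_sub_right_comm]
    exact add_mem ih ((idealG K 𝔧 f).smul_of_tower_mem _
      (Ideal.mul_mem_left _ _ (Ideal.subset_span ⟨α, hα, rfl⟩)))

end Reduction

section StarMultiples

variable {K} {𝔧 : Set (Mon N)} {f : Mon N → MvPolynomial (Fin N) K} {D : ℕ}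

def starMultiples (𝔧 : Set (Mon N)) (f : Mon N → MvPolynomial (Fin N) K) (s : Set (Mon N)) :
    Set (MvPolynomial (Fin N) K) :=
  (fun p : Mon N × Mon N => mono K p.2 * f p.1) ''
    {p | p.1 ∈ MinBasis 𝔧 ∧ StarCond p.1 p.2 ∧ p.2 ∈ s}

lemma Reduces.sub_mem_span_starMultiples (hss : StronglyStable 𝔧) (hD : ∀ u ∉ 𝔧, mdeg u < D)
    (hf : NHMarkedSet K 𝔧 f) {r : ℕ} {g g' : MvPolynomial (Fin N) K} (hred : Reduces K 𝔧 f g g')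
    (hg : ∀ γ ∈ g.support, γ ∈ 𝔧 → starRank 𝔧 D γ < r) :
    g - g' ∈ Submodule.span K (starMultiples 𝔧 f {η | radixWeight D η < r}) := by
  suffices H : g - g' ∈ Submodule.span K (starMultiples 𝔧 f {η | radixWeight D η < r}) ∧
      ∀ γ ∈ g'.support, γ ∈ 𝔧 → starRank 𝔧 D γ < r from H.1
  induction hred with
  | refl => exact ⟨by simp, hg⟩
  | tail _ hstep ih =>
    obtain ⟨hspan, hrank⟩ := ih
    obtain ⟨γ, α, η, hγ, hγ𝔧, hα, rfl, hs, rfl⟩ := hstep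
    have hη : radixWeight D η < r := starRank_add hα hs ▸ hrank _ hγ hγ𝔧
    refine ⟨?_, fun v hv hv𝔧 => ?_⟩
    · rw [sub_sub_eq_add_sub, add_sub_right_comm]
      exact add_mem hspan (Submodule.smul_mem _ _
        (Submodule.subset_span ⟨(α, η), ⟨hα, hs, hη⟩, rfl⟩))
    · rcases mem_support_or_starRank_lt hss hD hf hα hv hv𝔧 with h | h
      · exact hrank v h.1 hv𝔧
      · exact h.trans hη

lemma X_mul_mem_span_starMultiples (hss : StronglyStable 𝔧) (hD : ∀ u ∉ 𝔧, mdeg u < D)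
    (hf : NHMarkedSet K 𝔧 f) {β : Mon N} (hβ : β ∈ MinBasis 𝔧) {i j : Fin N} (hij : i < j)
    (hi : β i ≠ 0) (h0 : Reduces K 𝔧 f (X j * f β) 0) :
    X j * f β ∈ Submodule.span K (starMultiples 𝔧 f {η | radixWeight D η < (D + 1) ^ (j : ℕ)}) := by
  refine sub_zero (X j * f β) ▸ h0.sub_mem_span_starMultiples hss hD hf fun γ hγ hγ𝔧 => ?_
  rw [support_X_mul, Finset.mem_map] at hγ
  obtain ⟨w, hw, rfl⟩ := hγ
  obtain ⟨α, η, hα, h, hs⟩ := hss.exists_starDecomp hγ𝔧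
  rw [h, starRank_add hα hs]
  have hcases : w = β ∨ w ∉ 𝔧 := (eq_or_ne w β).imp_right ((hf β hβ).2 w hw)
  have hw' : ∀ v ∈ 𝔧, v ≤ w → ∃ i < j, v i ≠ 0 := fun v hv hvw => by
    rcases hcases with rfl | hw𝔧
    · exact ⟨i, hij, hβ.2 v hv hvw ▸ hi⟩
    · exact absurd (add_tsub_cancel_of_le hvw ▸ hss.1 v hv (w - v)) hw𝔧
  obtain ⟨hη, hdeg⟩ := hs.lt_and_mdeg_le_of_add_eq_single_add hα.1 hw' h.symm
  refine radixWeight_lt_pow hη (hdeg.trans ?_)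
  rcases hcases with rfl | hw𝔧
  · exact mdeg_le_of_mem_minBasis hD hβ
  · exact (hD w hw𝔧).le

/-- If `x^δ f_β` is not a star product, some `x_j ∣ x^δ` has `x_j > min x^β`; expanding
`x_j f_β` along its reduction to `0` writes `x^δ f_β` through products of smaller radix weight. -/
lemma mono_mul_mem_span_starMultiples (hss : StronglyStable 𝔧) (hD : ∀ u ∉ 𝔧, mdeg u < D)
    (hf : NHMarkedSet K 𝔧 f)
    (hcrit : ∀ α ∈ MinBasis 𝔧, ∀ i : Fin N, (∃ j : Fin N, j < i ∧ α j ≠ 0) →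
      Reduces K 𝔧 f (X i * f α) 0)
    (δ : Mon N) {β : Mon N} (hβ : β ∈ MinBasis 𝔧) :
    mono K δ * f β ∈ Submodule.span K (starMultiples 𝔧 f Set.univ) := by
  induction hk : radixWeight D δ using Nat.strong_induction_on generalizing δ β with
  | _ k ih =>
  by_cases hs : StarCond β δ
  · exact Submodule.subset_span ⟨(β, δ), ⟨hβ, hs, trivial⟩, rfl⟩
  simp only [StarCond, not_forall, not_le] at hs
  obtain ⟨i, j, hi, hj, hij⟩ := hs
  have hX := X_mul_mem_span_starMultiples (D := D) hss hD hf hβ hij hi (hcrit β hβ j ⟨i, hij, hi⟩)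
  have hδ : δ - Finsupp.single j 1 + Finsupp.single j 1 = δ :=
    tsub_add_cancel_of_le (Finsupp.single_le_iff.2 (Nat.one_le_iff_ne_zero.2 hj))
  have hsplit : mono K δ * f β = mono K (δ - Finsupp.single j 1) * (X j * f β) := by
    rw [← mul_assoc, X, mono, mono, monomial_mul, one_mul, hδ]
  rw [hsplit]
  refine Submodule.span_induction ?_ (by simp)
    (fun x y _ _ hx hy => by rw [mul_add]; exact add_mem hx hy)
    (fun c x _ hx => by rw [mul_smul_comm]; exact Submodule.smul_mem _ c hx) hX
  rintro _ ⟨⟨β', η⟩, ⟨hβ', -, hη⟩, rfl⟩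
  rw [← mul_assoc, mono, mono, monomial_mul, one_mul]
  refine ih _ ?_ _ hβ' rfl
  have := congrArg (radixWeight D) hδ
  rw [map_add, radixWeight_single, one_mul] at this
  replace hη : radixWeight D η < (D + 1) ^ (j : ℕ) := hη
  change radixWeight D (δ - Finsupp.single j 1 + η) < k
  rw [← hk, map_add]
  omega

lemma mem_span_starMultiples_of_mem_idealG (hss : StronglyStable 𝔧)
    (hD : ∀ u ∉ 𝔧, mdeg u < D) (hf : NHMarkedSet K 𝔧 f)
    (hcrit : ∀ α ∈ MinBasis 𝔧, ∀ i : Fin N, (∃ j : Fin N, j < i ∧ α j ≠ 0) →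
      Reduces K 𝔧 f (X i * f α) 0)
    {h : MvPolynomial (Fin N) K} (hh : h ∈ idealG K 𝔧 f) :
    h ∈ Submodule.span K (starMultiples 𝔧 f Set.univ) := by
  have hmul : ∀ r : MvPolynomial (Fin N) K, ∀ β ∈ MinBasis 𝔧,
      r * f β ∈ Submodule.span K (starMultiples 𝔧 f Set.univ) := fun r β hβ => by
    induction r using MvPolynomial.induction_on' with
    | monomial u a =>
      have hmono : monomial u a = a • mono K u := by rw [mono, smul_monomial, smul_eq_mul, mul_one]
      rw [hmono, smul_mul_assoc]
      exact Submodule.smul_mem _ a (mono_mul_mem_span_starMultiples hss hD hf hcrit u hβ)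
    | add p q hp hq => rw [add_mul]; exact add_mem hp hq
  obtain ⟨c, hc, rfl⟩ := Submodule.mem_span_set.1 hh
  refine Submodule.sum_mem _ fun x hx => ?_
  obtain ⟨β, hβ, rfl⟩ := hc hx
  exact hmul _ β hβ

lemma coeff_mono_mul_eq_zero (hJ : MonIdeal 𝔧) (hD : ∀ u ∉ 𝔧, mdeg u < D)
    (hf : NHMarkedSet K 𝔧 f) {β η β₀ η₀ : Mon N} (hβ : β ∈ MinBasis 𝔧) (hs : StarCond β η)
    (hβ₀ : β₀ ∈ MinBasis 𝔧) (hs₀ : StarCond β₀ η₀) (hne : (β, η) ≠ (β₀, η₀))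
    (hle : radixWeight D η ≤ radixWeight D η₀) :
    coeff (β₀ + η₀) (mono K η * f β) = 0 := by
  by_contra h
  obtain ⟨u, hu, he⟩ := exists_eq_add_of_mem_support_mono_mul (mem_support_iff.2 h)
  by_cases huβ : u = β
  · subst huβ
    obtain ⟨rfl, rfl⟩ := starDecomp_unique hβ hβ₀ hs hs₀ (add_comm u η ▸ he.symm)
    exact hne rfl
  · have hu𝔧 := (hf β hβ).2 u hu huβ
    exact absurd hle (not_le.2 (radixWeight_lt_of_add_eq hJ hu𝔧 (hD u hu𝔧).le hβ₀.1 hs₀ he.symm))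

theorem eq_zero_of_mem_span_starMultiples (hJ : MonIdeal 𝔧) (hD : ∀ u ∉ 𝔧, mdeg u < D)
    (hf : NHMarkedSet K 𝔧 f) {h : MvPolynomial (Fin N) K}
    (hmem : h ∈ Submodule.span K (starMultiples 𝔧 f Set.univ)) (hred : IsReducedPoly K 𝔧 h) :
    h = 0 := by
  classical
  obtain ⟨l, hl, rfl⟩ := (Finsupp.mem_span_image_iff_linearCombination K).1 hmem
  suffices hl0 : l = 0 by simp [hl0]
  by_contra hl0
  obtain ⟨⟨β₀, η₀⟩, hp₀, hmax⟩ := l.support.exists_max_image (fun p => radixWeight D p.2)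
    (Finsupp.support_nonempty_iff.2 hl0)
  obtain ⟨hβ₀, hs₀, -⟩ := hl hp₀
  have hcoeff : coeff (β₀ + η₀) (Finsupp.linearCombination K
      (fun p : Mon N × Mon N => mono K p.2 * f p.1) l) = l (β₀, η₀) := by
    rw [Finsupp.linearCombination_apply, Finsupp.sum, coeff_sum,
      Finset.sum_eq_single (β₀, η₀)]
    · rw [coeff_smul, add_comm β₀, coeff_add_mono_mul, (hf β₀ hβ₀).1, smul_eq_mul, mul_one]
    · rintro ⟨β, η⟩ hp hne
      obtain ⟨hβ, hs, -⟩ := hl hp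
      rw [coeff_smul, coeff_mono_mul_eq_zero hJ hD hf hβ hs hβ₀ hs₀ hne (hmax _ hp), smul_zero]
    · exact fun h => absurd hp₀ h
  exact hred _ (mem_support_iff.2 (hcoeff ▸ Finsupp.mem_support_iff.1 hp₀)) (hJ β₀ hβ₀.1 η₀)

end StarMultiples

section MarkedBasis

variable {K} {𝔧 : Set (Mon N)} {f : Mon N → MvPolynomial (Fin N) K} {D : ℕ}

lemma JmMarkedSet.nhMarkedSet {m : ℕ} (h : JmMarkedSet K 𝔧 m f) : NHMarkedSet K 𝔧 f :=
  fun α hα => ⟨(h α hα).1, fun u hu hne => ((h α hα).2 u hu hne).1⟩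

lemma mem_spanNLE_iff {t : ℕ} {g : MvPolynomial (Fin N) K} :
    g ∈ spanNLE K 𝔧 t ↔ ∀ u ∈ g.support, u ∉ 𝔧 ∧ mdeg u ≤ t := by
  rw [spanNLE, show mono K = fun u : Mon N => monomial u (1 : K) from rfl,
    ← restrictSupport_eq_span, mem_restrictSupport_iff]
  rfl

lemma spanNLE_le_degLE (t : ℕ) : spanNLE K 𝔧 t ≤ degLE K N t :=
  fun _ hg u hu => (mem_spanNLE_iff.1 hg u hu).2

lemma IsReducedPoly.mem_spanNLE (hD : ∀ u ∉ 𝔧, mdeg u < D) {g : MvPolynomial (Fin N) K}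
    (hg : IsReducedPoly K 𝔧 g) {t : ℕ} (ht : D - 1 ≤ t) : g ∈ spanNLE K 𝔧 t :=
  mem_spanNLE_iff.2 fun u hu => ⟨hg u hu, by have := hD u (hg u hu); omega⟩

lemma JmMarkedBasis.reduces_zero (hss : StronglyStable 𝔧) (hD : ∀ u ∉ 𝔧, mdeg u < D)
    (hf : NHMarkedSet K 𝔧 f) (hbasis : JmMarkedBasis K 𝔧 (D - 1) f)
    {g : MvPolynomial (Fin N) K} (hg : g ∈ idealG K 𝔧 f) : Reduces K 𝔧 f g 0 := by
  obtain ⟨g', hred, hg'⟩ := exists_reduces_isReducedPoly hss hD hf g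
  have hN := hg'.mem_spanNLE hD le_rfl
  have hG : g' ∈ GleSub K 𝔧 f (D - 1) :=
    ⟨by simpa using sub_mem hg hred.sub_mem_idealG, spanNLE_le_degLE _ hN⟩
  rwa [Submodule.disjoint_def.1 ((hbasis.2 _ le_rfl).1) g' hN hG] at hred

theorem jmMarkedBasis_of_reduces_zero (hss : StronglyStable 𝔧) (hD : ∀ u ∉ 𝔧, mdeg u < D)
    (hf : NHMarkedSet K 𝔧 f)
    (hcrit : ∀ α ∈ MinBasis 𝔧, ∀ i : Fin N, (∃ j : Fin N, j < i ∧ α j ≠ 0) →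
      Reduces K 𝔧 f (X i * f α) 0) :
    JmMarkedBasis K 𝔧 (D - 1) f := by
  refine ⟨fun α hα => ⟨(hf α hα).1, fun u hu hne => ?_⟩, fun t ht => ⟨?_, ?_⟩⟩
  · have hu𝔧 := (hf α hα).2 u hu hne
    exact ⟨hu𝔧, le_max_of_le_left (by have := hD u hu𝔧; omega)⟩
  · refine Submodule.disjoint_def.2 fun g hN hG => ?_
    exact eq_zero_of_mem_span_starMultiples hss.1 hD hf
      (mem_span_starMultiples_of_mem_idealG hss hD hf hcrit hG.1)
      fun u hu => (mem_spanNLE_iff.1 hN u hu).1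
  · refine le_antisymm (sup_le (spanNLE_le_degLE t) inf_le_right) fun g hg => ?_
    obtain ⟨g', hred, hg'⟩ := exists_reduces_isReducedPoly hss hD hf g
    have hN := hg'.mem_spanNLE hD ht
    rw [← sub_add_cancel g g']
    exact add_mem (Submodule.mem_sup_right ⟨hred.sub_mem_idealG,
      sub_mem hg (spanNLE_le_degLE t hN)⟩) (Submodule.mem_sup_left hN)

end MarkedBasis

theorem artinian_markedBasis_criterion_general {n : ℕ} (K : Type) [Field K]
    (𝔧 : Set (Mon (n + 1))) (m : ℕ) (f : Mon (n + 1) → MvPolynomial (Fin (n + 1)) K)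
    (hss : StronglyStable 𝔧)
    (hfin : {u : Mon (n + 1) | u ∉ 𝔧}.Finite)
    (hms : JmMarkedSet K 𝔧 m f) :
    (regC 𝔧 - 1 ≤ m →
      ∀ β ∈ 𝔧, ∃ gβ, Reduces K 𝔧 f (mono K β) gβ ∧
        ∀ u ∈ gβ.support, u ∉ 𝔧 ∧ mdeg u ≤ regC 𝔧 - 1) ∧
    (satC 𝔧 ≤ m →
      (JmMarkedBasis K 𝔧 (satC 𝔧 - 1) f ↔
        ∀ α ∈ MinBasis 𝔧, ∀ i : Fin (n + 1), (∃ j : Fin (n + 1), j < i ∧ α j ≠ 0) →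
          Reduces K 𝔧 f (MvPolynomial.X i * f α) 0)) := by
  obtain ⟨D, hD₀, hD⟩ := hss.exists_single_zero_mem_minBasis hfin
  have hf := hms.nhMarkedSet
  rw [regC_eq hD₀ hD, satC_eq hD₀ hD]
  refine ⟨fun _ β _ => ?_,
    fun _ => ⟨fun hbasis α hα i _ => ?_, jmMarkedBasis_of_reduces_zero hss hD hf⟩⟩
  · obtain ⟨g, hred, hg⟩ := exists_reduces_isReducedPoly hss hD hf (mono K β)
    exact ⟨g, hred, mem_spanNLE_iff.1 (hg.mem_spanNLE hD le_rfl)⟩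
  · exact hbasis.reduces_zero hss hD hf (Ideal.mul_mem_left _ _ (Ideal.subset_span ⟨α, hα, rfl⟩))

/-- for an Artinian strongly stable `𝔧` (finite sous-escalier)
and a `[𝔧,m]`-marked set `𝔊` with `m ≥ reg(𝔧) - 1`, every monomial of `𝔧`
reduces to a polynomial supported in `N(𝔧)_{≤ reg(𝔧)-1}`; consequently, for
`m ≥ sat(𝔧)`, `𝔊` is a `[𝔧, sat(𝔧)-1]`-marked basis iff `x_i f_α` reduces to
`0` for all `f_α ∈ 𝔊` and all `x_i > min(x^α)`. -/
theorem artinian_markedBasis_criterion {n : ℕ} (K : Type) [Field K]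
    (𝔧 : Set (Mon (n + 1))) (m : ℕ) (f : Mon (n + 1) → MvPolynomial (Fin (n + 1)) K)
    (hss : StronglyStable 𝔧) (hm : 0 < m)
    (hfin : {u : Mon (n + 1) | u ∉ 𝔧}.Finite)
    (hms : JmMarkedSet K 𝔧 m f) :
    (regC 𝔧 - 1 ≤ m →
      ∀ β ∈ 𝔧, ∃ gβ, Reduces K 𝔧 f (mono K β) gβ ∧
        ∀ u ∈ gβ.support, u ∉ 𝔧 ∧ mdeg u ≤ regC 𝔧 - 1) ∧
    (satC 𝔧 ≤ m →
      (JmMarkedBasis K 𝔧 (satC 𝔧 - 1) f ↔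
        ∀ α ∈ MinBasis 𝔧, ∀ i : Fin (n + 1), (∃ j : Fin (n + 1), j < i ∧ α j ≠ 0) →
          Reduces K 𝔧 f (MvPolynomial.X i * f α) 0)) :=
  artinian_markedBasis_criterion_general K 𝔧 m f hss hfin hms

end Paper
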